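/- arXiv:1705.07734 — 14 statements merged into one kernel-verified Lean document; each statement's English description precedes it below -/
import Mathlib

section
/- For all integers m and n, with x = 4(n^2-2m^2)(n^2+2mn+2m^2)(n^2+4mn+2m^2), z = 16mn(n+m)(n+2m)(n^2+2mn+2m^2), and b = 4(n^2+2mn+2m^2)^3, the identity x^2 + z^2 = b^2 holds. -/
/-! The parametrization is Euclid's formula used twice: with `s = n^2+2mn+2m^2`,
`p = n^2+2mn` and `q = 2m(n+m)`, Euclid's formula at `(n+m, m)` gives `p^2 + q^2 = s^2`,
and `(x, z, b)` is `4s` times Euclid's triple `(p^2 - q^2, 2pq, p^2 + q^2)`. -/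

theorem euclid_sq_add_sq {R : Type*} [CommRing R] (p q : R) :
    (p ^ 2 - q ^ 2) ^ 2 + (2 * p * q) ^ 2 = (p ^ 2 + q ^ 2) ^ 2 := by
  ring

theorem stmt_1 (m n x z b : ℤ)
    (hx : x = 4*(n^2-2*m^2)*(n^2+2*m*n+2*m^2)*(n^2+4*m*n+2*m^2))
    (hz : z = 16*m*n*(n+m)*(n+2*m)*(n^2+2*m*n+2*m^2))
    (hb : b = 4*(n^2+2*m*n+2*m^2)^3) :
    x^2 + z^2 = b^2 := by
  set s := n ^ 2 + 2 * m * n + 2 * m ^ 2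
  set p := n ^ 2 + 2 * m * n
  set q := 2 * m * (n + m)
  have hs : p ^ 2 + q ^ 2 = s ^ 2 := by
    linear_combination euclid_sq_add_sq (n + m) m
  have hx' : x = 4 * s * (p ^ 2 - q ^ 2) := by rw [hx]; ring
  have hz' : z = 4 * s * (2 * p * q) := by rw [hz]; ring
  have hb' : b = 4 * s * s ^ 2 := by rw [hb]; ring
  rw [hx', hz', hb']
  linear_combination (4 * s) ^ 2 * euclid_sq_add_sq p q + (4 * s) ^ 2 * (p ^ 2 + q ^ 2 + s ^ 2) * hs
end

section
/- For all integers m and n, with x = 4(n^2-2m^2)(n^2+2mn+2m^2)(n^2+4mn+2m^2), c1 = (n^2+4mn+2m^2)(n^2+4mn+6m^2)(3n^2+4mn+2m^2), and d1 = (n^2+4mn+2m^2)(5n^4+16mn^3+28m^2n^2+32m^3n+20m^4), the identity x^2 + c1^2 = d1^2 holds. -/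
theorem stmt_2 (m n x c1 d1 : ℤ)
    (hx : x = 4*(n^2-2*m^2)*(n^2+2*m*n+2*m^2)*(n^2+4*m*n+2*m^2))
    (hc1 : c1 = (n^2+4*m*n+2*m^2)*(n^2+4*m*n+6*m^2)*(3*n^2+4*m*n+2*m^2))
    (hd1 : d1 = (n^2+4*m*n+2*m^2)*(5*n^4+16*m*n^3+28*m^2*n^2+32*m^3*n+20*m^4)) :
    x^2 + c1^2 = d1^2 := by
  subst hx hc1 hd1
  ring
end

section
/- For all integers m and n, with y = 3(n^2-2m^2)(n^2+2mn+2m^2)(n^2+4mn+2m^2), z = 16mn(n+m)(n+2m)(n^2+2mn+2m^2), c1 = (n^2+4mn+2m^2)(n^2+4mn+6m^2)(3n^2+4mn+2m^2), and c2 = (n^2-2m^2)(n^2+2m^2)(3n^2+8mn+6m^2), the identity 2y^2 + 2z^2 = c1^2 + c2^2 holds. -/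
theorem stmt_4 (m n y z c1 c2 : ℤ)
    (hy : y = 3*(n^2-2*m^2)*(n^2+2*m*n+2*m^2)*(n^2+4*m*n+2*m^2))
    (hz : z = 16*m*n*(n+m)*(n+2*m)*(n^2+2*m*n+2*m^2))
    (hc1 : c1 = (n^2+4*m*n+2*m^2)*(n^2+4*m*n+6*m^2)*(3*n^2+4*m*n+2*m^2))
    (hc2 : c2 = (n^2-2*m^2)*(n^2+2*m^2)*(3*n^2+8*m*n+6*m^2)) :
    2*y^2 + 2*z^2 = c1^2 + c2^2 := by
  subst hy hz hc1 hc2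
  ring
end

section
/- For all integers m and n, with y = 3(n^2-2m^2)(n^2+2mn+2m^2)(n^2+4mn+2m^2), b = 4(n^2+2mn+2m^2)^3, d1 = (n^2+4mn+2m^2)(5n^4+16mn^3+28m^2n^2+32m^3n+20m^4), and d2 = (n^2-2m^2)(5n^4+24mn^3+52m^2n^2+48m^3n+20m^4), the identity 2y^2 + 2b^2 = d1^2 + d2^2 holds. -/
theorem stmt_5 (m n y b d1 d2 : ℤ)
    (hy : y = 3*(n^2-2*m^2)*(n^2+2*m*n+2*m^2)*(n^2+4*m*n+2*m^2))
    (hb : b = 4*(n^2+2*m*n+2*m^2)^3)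
    (hd1 : d1 = (n^2+4*m*n+2*m^2)*(5*n^4+16*m*n^3+28*m^2*n^2+32*m^3*n+20*m^4))
    (hd2 : d2 = (n^2-2*m^2)*(5*n^4+24*m*n^3+52*m^2*n^2+48*m^3*n+20*m^4)) :
    2*y^2 + 2*b^2 = d1^2 + d2^2 := by
  subst hy hb hd1 hd2
  ring
end

section
/- For all integers m and n, setting x = 4(n^2-2m^2)(n^2+2mn+2m^2)(n^2+4mn+2m^2), y = 3(n^2-2m^2)(n^2+2mn+2m^2)(n^2+4mn+2m^2), z = 16mn(n+m)(n+2m)(n^2+2mn+2m^2), a = 5(n^2-2m^2)(n^2+2mn+2m^2)(n^2+4mn+2m^2), b = 4(n^2+2mn+2m^2)^3, c1 = (n^2+4mn+2m^2)(n^2+4mn+6m^2)(3n^2+4mn+2m^2), c2 = (n^2-2m^2)(n^2+2m^2)(3n^2+8mn+6m^2), d1 = (n^2+4mn+2m^2)(5n^4+16mn^3+28m^2n^2+32m^3n+20m^4), d2 = (n^2-2m^2)(5n^4+24mn^3+52m^2n^2+48m^3n+20m^4), all seven equations hold: x^2+y^2=a^2, x^2+z^2=b^2, x^2+c1^2=d1^2,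 x^2+c2^2=d2^2, 2y^2+2z^2=c1^2+c2^2, 2y^2+2b^2=d1^2+d2^2, and 2a^2+2z^2=d1^2+d2^2. -/
/-!
The first five equations are polynomial identities in `m, n` (the first one simply because
`x, y, a` are `4, 3, 5` times a common factor). The last two then follow from them alone:
by the body-diagonal relations and the parallelogram law,
`d1² + d2² = 2x² + c1² + c2² = 2x² + 2y² + 2z²`, which equals `2y² + 2b²` and `2a² + 2z²` by the
two rectangular faces.
-/

theorem sq_add_sq_body_diagonals_eq {R : Type*} [CommRing R] {x y z a b c1 c2 d1 d2 : R}
    (hxy : x^2 + y^2 = a^2) (hxz : x^2 + z^2 = b^2)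
    (hd1 : x^2 + c1^2 = d1^2) (hd2 : x^2 + c2^2 = d2^2)
    (hpar : 2*y^2 + 2*z^2 = c1^2 + c2^2) :
    2*y^2 + 2*b^2 = d1^2 + d2^2 ∧ 2*a^2 + 2*z^2 = d1^2 + d2^2 :=
  ⟨by linear_combination hd1 + hd2 + hpar - 2 * hxz,
   by linear_combination hd1 + hd2 + hpar - 2 * hxy⟩

theorem stmt_7 (m n x y z a b c1 c2 d1 d2 : ℤ)
    (hx : x = 4*(n^2-2*m^2)*(n^2+2*m*n+2*m^2)*(n^2+4*m*n+2*m^2))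
    (hy : y = 3*(n^2-2*m^2)*(n^2+2*m*n+2*m^2)*(n^2+4*m*n+2*m^2))
    (hz : z = 16*m*n*(n+m)*(n+2*m)*(n^2+2*m*n+2*m^2))
    (ha : a = 5*(n^2-2*m^2)*(n^2+2*m*n+2*m^2)*(n^2+4*m*n+2*m^2))
    (hb : b = 4*(n^2+2*m*n+2*m^2)^3)
    (hc1 : c1 = (n^2+4*m*n+2*m^2)*(n^2+4*m*n+6*m^2)*(3*n^2+4*m*n+2*m^2))
    (hc2 : c2 = (n^2-2*m^2)*(n^2+2*m^2)*(3*n^2+8*m*n+6*m^2))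
    (hd1 : d1 = (n^2+4*m*n+2*m^2)*(5*n^4+16*m*n^3+28*m^2*n^2+32*m^3*n+20*m^4))
    (hd2 : d2 = (n^2-2*m^2)*(5*n^4+24*m*n^3+52*m^2*n^2+48*m^3*n+20*m^4)) :
    x^2 + y^2 = a^2 ∧ x^2 + z^2 = b^2 ∧ x^2 + c1^2 = d1^2 ∧ x^2 + c2^2 = d2^2 ∧ 2*y^2 + 2*z^2 = c1^2 + c2^2 ∧ 2*y^2 + 2*b^2 = d1^2 + d2^2 ∧ 2*a^2 + 2*z^2 = d1^2 + d2^2 := by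
  have hxy : x^2 + y^2 = a^2 := by rw [hx, hy, ha]; ring
  have hxz : x^2 + z^2 = b^2 := by rw [hx, hz, hb]; ring
  have hxc1 : x^2 + c1^2 = d1^2 := by rw [hx, hc1, hd1]; ring
  have hxc2 : x^2 + c2^2 = d2^2 := by rw [hx, hc2, hd2]; ring
  have hpar : 2*y^2 + 2*z^2 = c1^2 + c2^2 := by rw [hy, hz, hc1, hc2]; ring
  exact ⟨hxy, hxz, hxc1, hxc2, hpar, sq_add_sq_body_diagonals_eq hxy hxz hxc1 hxc2 hpar⟩
end

section
/- For all integers m and n, setting x = 4(n^2-4mn-4m^2)(5n^2+8mn+4m^2)(7n^2+12mn+4m^2), y = 3(n^2-4mn-4m^2)(5n^2+8mn+4m^2)(7n^2+12mn+4m^2), z = 32n(n+m)(n+2m)(3n+2m)(5n^2+8mn+4m^2), a = 5(n^2-4mn-4m^2)(5n^2+8mn+4m^2)(7n^2+12mn+4m^2), b = 4(5n^2+8mn+4m^2)^3, c1 = (7n^2+12mn+4m^2)(9n^2+20mn+12m^2)(11n^2+12mn+4m^2), c2 = (n^2-4mn-4m^2)(3n^2+4mn+4m^2)(17n^2+28mn+12m^2),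 d1 = (7n^2+12mn+4m^2)(101n^4+312mn^3+424m^2n^2+288m^3n+80m^4), d2 = (n^2-4mn-4m^2)(149n^4+488mn^3+616m^2n^2+352m^3n+80m^4), all seven equations hold: x^2+y^2=a^2, x^2+z^2=b^2, x^2+c1^2=d1^2, x^2+c2^2=d2^2, 2y^2+2z^2=c1^2+c2^2, 2y^2+2b^2=d1^2+d2^2, and 2a^2+2z^2=d1^2+d2^2. -/
/-!
Only five of the seven equations are independent: given the four diagonal relations through `x`
and the parallelogram law `2y² + 2z² = c₁² + c₂²` for the slanted face, the two laws for the body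
diagonals follow by linear combination. For Parametrization 2 the five independent equations are
polynomial identities in `m, n`.
-/

theorem body_diagonal_sq_sum_of_face_diagonals {R : Type*} [CommRing R]
    {x y z a b c1 c2 d1 d2 : R} (ha : x^2 + y^2 = a^2) (hb : x^2 + z^2 = b^2)
    (hd1 : x^2 + c1^2 = d1^2) (hd2 : x^2 + c2^2 = d2^2) (hc : 2*y^2 + 2*z^2 = c1^2 + c2^2) :
    2*y^2 + 2*b^2 = d1^2 + d2^2 ∧ 2*a^2 + 2*z^2 = d1^2 + d2^2 :=
  ⟨by linear_combination (-2) * hb + hd1 + hd2 + hc,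
    by linear_combination (-2) * ha + hd1 + hd2 + hc⟩

theorem stmt_8 (m n x y z a b c1 c2 d1 d2 : ℤ)
    (hx : x = 4*(n^2-4*m*n-4*m^2)*(5*n^2+8*m*n+4*m^2)*(7*n^2+12*m*n+4*m^2))
    (hy : y = 3*(n^2-4*m*n-4*m^2)*(5*n^2+8*m*n+4*m^2)*(7*n^2+12*m*n+4*m^2))
    (hz : z = 32*n*(n+m)*(n+2*m)*(3*n+2*m)*(5*n^2+8*m*n+4*m^2))
    (ha : a = 5*(n^2-4*m*n-4*m^2)*(5*n^2+8*m*n+4*m^2)*(7*n^2+12*m*n+4*m^2))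
    (hb : b = 4*(5*n^2+8*m*n+4*m^2)^3)
    (hc1 : c1 = (7*n^2+12*m*n+4*m^2)*(9*n^2+20*m*n+12*m^2)*(11*n^2+12*m*n+4*m^2))
    (hc2 : c2 = (n^2-4*m*n-4*m^2)*(3*n^2+4*m*n+4*m^2)*(17*n^2+28*m*n+12*m^2))
    (hd1 : d1 = (7*n^2+12*m*n+4*m^2)*(101*n^4+312*m*n^3+424*m^2*n^2+288*m^3*n+80*m^4))
    (hd2 : d2 = (n^2-4*m*n-4*m^2)*(149*n^4+488*m*n^3+616*m^2*n^2+352*m^3*n+80*m^4)) :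
    x^2 + y^2 = a^2 ∧ x^2 + z^2 = b^2 ∧ x^2 + c1^2 = d1^2 ∧ x^2 + c2^2 = d2^2 ∧ 2*y^2 + 2*z^2 = c1^2 + c2^2 ∧ 2*y^2 + 2*b^2 = d1^2 + d2^2 ∧ 2*a^2 + 2*z^2 = d1^2 + d2^2 := by
  have ha' : x^2 + y^2 = a^2 := by rw [hx, hy, ha]; ring
  have hb' : x^2 + z^2 = b^2 := by rw [hx, hz, hb]; ring
  have hd1' : x^2 + c1^2 = d1^2 := by rw [hx, hc1, hd1]; ring
  have hd2' : x^2 + c2^2 = d2^2 := by rw [hx, hc2, hd2]; ring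
  have hc' : 2*y^2 + 2*z^2 = c1^2 + c2^2 := by rw [hy, hz, hc1, hc2]; ring
  exact ⟨ha', hb', hd1', hd2', hc',
    body_diagonal_sq_sum_of_face_diagonals ha' hb' hd1' hd2' hc'⟩
end

section
/- For all integers m and n, setting x = 4(7n^2-8mn-16m^2)(13n^2+24mn+16m^2)(17n^2+40mn+16m^2), y = 3(7n^2-8mn-16m^2)(13n^2+24mn+16m^2)(17n^2+40mn+16m^2), z = 32n(n+4m)(3n+4m)(5n+4m)(13n^2+24mn+16m^2), a = 5(7n^2-8mn-16m^2)(13n^2+24mn+16m^2)(17n^2+40mn+16m^2), b = 4(13n^2+24mn+16m^2)^3, c1 = (17n^2+40mn+16m^2)(19n^2+56mn+48m^2)(33n^2+40mn+16m^2), c2 = (7n^2-8mn-16m^2)(9n^2+8mn+16m^2)(43n^2+88mn+48m^2), d1 = (17n^2+40mn+16m^2)(725n^4+2384mn^3+3808m^2n^2+3328m^3n+1280m^4), d2 = (7n^2-8mn-16m^2)(965n^4+3856mn^3+6112m^2n^2+4352m^3n+1280m^4), all seven equations hold: x^2+y^2=a^2, x^2+z^2=b^2, x^2+c1^2=d1^2,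 x^2+c2^2=d2^2, 2y^2+2z^2=c1^2+c2^2, 2y^2+2b^2=d1^2+d2^2, and 2a^2+2z^2=d1^2+d2^2. -/
/-! With `P = 7n²-8mn-16m²`, `Q = 13n²+24mn+16m²`, `R = 17n²+40mn+16m²`, the triple `(x, y, a)`
is `PQR` times `(4, 3, 5)`, and each of `x² + z² = b²`, `x² + c₁² = d₁²`, `x² + c₂² = d₂²`
becomes, after cancelling the common factor `Q²`, `R²`, `P²` respectively, a polynomial identity
in `m, n` of lower degree.
The last two relations are linear consequences, in the squares, of the first five. -/

theorem diagonal_sum_relations_of_pythagorean {α : Type*} [CommRing α] {x y z a b c₁ c₂ d₁ d₂ : α}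
    (hxy : x ^ 2 + y ^ 2 = a ^ 2) (hxz : x ^ 2 + z ^ 2 = b ^ 2)
    (hxc₁ : x ^ 2 + c₁ ^ 2 = d₁ ^ 2) (hxc₂ : x ^ 2 + c₂ ^ 2 = d₂ ^ 2)
    (hc : 2 * y ^ 2 + 2 * z ^ 2 = c₁ ^ 2 + c₂ ^ 2) :
    2 * y ^ 2 + 2 * b ^ 2 = d₁ ^ 2 + d₂ ^ 2 ∧ 2 * a ^ 2 + 2 * z ^ 2 = d₁ ^ 2 + d₂ ^ 2 :=
  ⟨by linear_combination hc + hxc₁ + hxc₂ - 2 * hxz,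
    by linear_combination hc + hxc₁ + hxc₂ - 2 * hxy⟩

theorem stmt_9 (m n x y z a b c1 c2 d1 d2 : ℤ)
    (hx : x = 4*(7*n^2-8*m*n-16*m^2)*(13*n^2+24*m*n+16*m^2)*(17*n^2+40*m*n+16*m^2))
    (hy : y = 3*(7*n^2-8*m*n-16*m^2)*(13*n^2+24*m*n+16*m^2)*(17*n^2+40*m*n+16*m^2))
    (hz : z = 32*n*(n+4*m)*(3*n+4*m)*(5*n+4*m)*(13*n^2+24*m*n+16*m^2))
    (ha : a = 5*(7*n^2-8*m*n-16*m^2)*(13*n^2+24*m*n+16*m^2)*(17*n^2+40*m*n+16*m^2))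
    (hb : b = 4*(13*n^2+24*m*n+16*m^2)^3)
    (hc1 : c1 = (17*n^2+40*m*n+16*m^2)*(19*n^2+56*m*n+48*m^2)*(33*n^2+40*m*n+16*m^2))
    (hc2 : c2 = (7*n^2-8*m*n-16*m^2)*(9*n^2+8*m*n+16*m^2)*(43*n^2+88*m*n+48*m^2))
    (hd1 : d1 = (17*n^2+40*m*n+16*m^2)*(725*n^4+2384*m*n^3+3808*m^2*n^2+3328*m^3*n+1280*m^4))
    (hd2 : d2 = (7*n^2-8*m*n-16*m^2)*(965*n^4+3856*m*n^3+6112*m^2*n^2+4352*m^3*n+1280*m^4)) :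
    x^2 + y^2 = a^2 ∧ x^2 + z^2 = b^2 ∧ x^2 + c1^2 = d1^2 ∧ x^2 + c2^2 = d2^2 ∧ 2*y^2 + 2*z^2 = c1^2 + c2^2 ∧ 2*y^2 + 2*b^2 = d1^2 + d2^2 ∧ 2*a^2 + 2*z^2 = d1^2 + d2^2 := by
  have hxy : x ^ 2 + y ^ 2 = a ^ 2 := by rw [hx, hy, ha]; ring
  have hxz : x ^ 2 + z ^ 2 = b ^ 2 := by rw [hx, hz, hb]; ring
  have hxc₁ : x ^ 2 + c1 ^ 2 = d1 ^ 2 := by rw [hx, hc1, hd1]; ring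
  have hxc₂ : x ^ 2 + c2 ^ 2 = d2 ^ 2 := by rw [hx, hc2, hd2]; ring
  have hc : 2 * y ^ 2 + 2 * z ^ 2 = c1 ^ 2 + c2 ^ 2 := by rw [hy, hz, hc1, hc2]; ring
  exact ⟨hxy, hxz, hxc₁, hxc₂, hc, diagonal_sum_relations_of_pythagorean hxy hxz hxc₁ hxc₂ hc⟩
end

section
/- For all integers m and n, setting x = 4(7n^2-12mn-18m^2)(17n^2+30mn+18m^2)(23n^2+48mn+18m^2), y = 3(7n^2-12mn-18m^2)(17n^2+30mn+18m^2)(23n^2+48mn+18m^2), z = 48n(n+3m)(4n+3m)(5n+6m)(17n^2+30mn+18m^2), a = 5(7n^2-12mn-18m^2)(17n^2+30mn+18m^2)(23n^2+48mn+18m^2), b = 4(17n^2+30mn+18m^2)^3, c1 = 9(3n^2+8mn+6m^2)(23n^2+48mn+18m^2)(41n^2+48mn+18m^2), c2 = 3(7n^2-12mn-18m^2)(11n^2+12mn+18m^2)(19n^2+36mn+18m^2), d1 = (23n^2+48mn+18m^2)(1205n^4+3912mn^3+5940m^2n^2+4752m^3n+1620m^4), d2 = (7n^2-12mn-18m^2)(1685n^4+6288mn^3+9180m^2n^2+6048m^3n+1620m^4),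 all seven equations hold: x^2+y^2=a^2, x^2+z^2=b^2, x^2+c1^2=d1^2, x^2+c2^2=d2^2, 2y^2+2z^2=c1^2+c2^2, 2y^2+2b^2=d1^2+d2^2, and 2a^2+2z^2=d1^2+d2^2. -/
/-!
The rectangular face `x, y, a` is the `3, 4, 5` triangle scaled by a common polynomial factor, and
the next four relations are polynomial identities in `m, n`. The last two need no computation:
by the face relations, `d1² + d2² = 2x² + c1² + c2² = 2(x² + y² + z²)`, which is both
`2y² + 2b²` and `2a² + 2z²`.
-/

theorem body_diagonals_sq_add_of_faces {R : Type*} [CommRing R] {x y z a b c1 c2 d1 d2 : R}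
    (hxy : x^2 + y^2 = a^2) (hxz : x^2 + z^2 = b^2) (hxc1 : x^2 + c1^2 = d1^2)
    (hxc2 : x^2 + c2^2 = d2^2) (hyz : 2*y^2 + 2*z^2 = c1^2 + c2^2) :
    2*y^2 + 2*b^2 = d1^2 + d2^2 ∧ 2*a^2 + 2*z^2 = d1^2 + d2^2 :=
  ⟨by linear_combination hyz - 2*hxz + hxc1 + hxc2,
   by linear_combination hyz - 2*hxy + hxc1 + hxc2⟩

theorem stmt_10 (m n x y z a b c1 c2 d1 d2 : ℤ)
    (hx : x = 4*(7*n^2-12*m*n-18*m^2)*(17*n^2+30*m*n+18*m^2)*(23*n^2+48*m*n+18*m^2))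
    (hy : y = 3*(7*n^2-12*m*n-18*m^2)*(17*n^2+30*m*n+18*m^2)*(23*n^2+48*m*n+18*m^2))
    (hz : z = 48*n*(n+3*m)*(4*n+3*m)*(5*n+6*m)*(17*n^2+30*m*n+18*m^2))
    (ha : a = 5*(7*n^2-12*m*n-18*m^2)*(17*n^2+30*m*n+18*m^2)*(23*n^2+48*m*n+18*m^2))
    (hb : b = 4*(17*n^2+30*m*n+18*m^2)^3)
    (hc1 : c1 = 9*(3*n^2+8*m*n+6*m^2)*(23*n^2+48*m*n+18*m^2)*(41*n^2+48*m*n+18*m^2))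
    (hc2 : c2 = 3*(7*n^2-12*m*n-18*m^2)*(11*n^2+12*m*n+18*m^2)*(19*n^2+36*m*n+18*m^2))
    (hd1 : d1 = (23*n^2+48*m*n+18*m^2)*(1205*n^4+3912*m*n^3+5940*m^2*n^2+4752*m^3*n+1620*m^4))
    (hd2 : d2 = (7*n^2-12*m*n-18*m^2)*(1685*n^4+6288*m*n^3+9180*m^2*n^2+6048*m^3*n+1620*m^4)) :
    x^2 + y^2 = a^2 ∧ x^2 + z^2 = b^2 ∧ x^2 + c1^2 = d1^2 ∧ x^2 + c2^2 = d2^2 ∧ 2*y^2 + 2*z^2 = c1^2 + c2^2 ∧ 2*y^2 + 2*b^2 = d1^2 + d2^2 ∧ 2*a^2 + 2*z^2 = d1^2 + d2^2 := by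
  have hxy : x^2 + y^2 = a^2 := by rw [hx, hy, ha]; ring
  have hxz : x^2 + z^2 = b^2 := by rw [hx, hz, hb]; ring
  have hxc1 : x^2 + c1^2 = d1^2 := by rw [hx, hc1, hd1]; ring
  have hxc2 : x^2 + c2^2 = d2^2 := by rw [hx, hc2, hd2]; ring
  have hyz : 2*y^2 + 2*z^2 = c1^2 + c2^2 := by rw [hy, hz, hc1, hc2]; ring
  exact ⟨hxy, hxz, hxc1, hxc2, hyz, body_diagonals_sq_add_of_faces hxy hxz hxc1 hxc2 hyz⟩
end

section
/- For all integers m and n, with x = 4(n^2-4mn-4m^2)(5n^2+8mn+4m^2)(7n^2+12mn+4m^2), z = 32n(n+m)(n+2m)(3n+2m)(5n^2+8mn+4m^2), and b = 4(5n^2+8mn+4m^2)^3, the identity x^2 + z^2 = b^2 holds. -/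
theorem stmt_11 (m n x z b : ℤ)
    (hx : x = 4*(n^2-4*m*n-4*m^2)*(5*n^2+8*m*n+4*m^2)*(7*n^2+12*m*n+4*m^2))
    (hz : z = 32*n*(n+m)*(n+2*m)*(3*n+2*m)*(5*n^2+8*m*n+4*m^2))
    (hb : b = 4*(5*n^2+8*m*n+4*m^2)^3) :
    x^2 + z^2 = b^2 := by
  subst hx hz hb
  ring
end

section
/- For all integers m and n, with y = 3(n^2-4mn-4m^2)(5n^2+8mn+4m^2)(7n^2+12mn+4m^2), z = 32n(n+m)(n+2m)(3n+2m)(5n^2+8mn+4m^2), c1 = (7n^2+12mn+4m^2)(9n^2+20mn+12m^2)(11n^2+12mn+4m^2), and c2 = (n^2-4mn-4m^2)(3n^2+4mn+4m^2)(17n^2+28mn+12m^2), the identity 2y^2 + 2z^2 = c1^2 + c2^2 holds. -/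
theorem stmt_12 (m n y z c1 c2 : ℤ)
    (hy : y = 3*(n^2-4*m*n-4*m^2)*(5*n^2+8*m*n+4*m^2)*(7*n^2+12*m*n+4*m^2))
    (hz : z = 32*n*(n+m)*(n+2*m)*(3*n+2*m)*(5*n^2+8*m*n+4*m^2))
    (hc1 : c1 = (7*n^2+12*m*n+4*m^2)*(9*n^2+20*m*n+12*m^2)*(11*n^2+12*m*n+4*m^2))
    (hc2 : c2 = (n^2-4*m*n-4*m^2)*(3*n^2+4*m*n+4*m^2)*(17*n^2+28*m*n+12*m^2)) :
    2*y^2 + 2*z^2 = c1^2 + c2^2 := by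
  subst hy hz hc1 hc2
  ring
end

section
/- For all integers m and n, with x = 4(7n^2-8mn-16m^2)(13n^2+24mn+16m^2)(17n^2+40mn+16m^2), c1 = (17n^2+40mn+16m^2)(19n^2+56mn+48m^2)(33n^2+40mn+16m^2), and d1 = (17n^2+40mn+16m^2)(725n^4+2384mn^3+3808m^2n^2+3328m^3n+1280m^4), the identity x^2 + c1^2 = d1^2 holds. -/
/-! All three sides carry the factor `k = 17n²+40mn+16m²`, and what remains is Euclid's
parametrisation `(2uv, u²-v², u²+v²)` with `u = 2(13n²+24mn+16m²)` and `v = 7n²-8mn-16m²`;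
indeed `u - v = 19n²+56mn+48m²` and `u + v = 33n²+40mn+16m²` are the other two factors of `c1`. -/

theorem stmt_13 (m n x c1 d1 : ℤ)
    (hx : x = 4*(7*n^2-8*m*n-16*m^2)*(13*n^2+24*m*n+16*m^2)*(17*n^2+40*m*n+16*m^2))
    (hc1 : c1 = (17*n^2+40*m*n+16*m^2)*(19*n^2+56*m*n+48*m^2)*(33*n^2+40*m*n+16*m^2))
    (hd1 : d1 = (17*n^2+40*m*n+16*m^2)*(725*n^4+2384*m*n^3+3808*m^2*n^2+3328*m^3*n+1280*m^4)) :
    x^2 + c1^2 = d1^2 := by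
  have h : PythagoreanTriple x c1 d1 := PythagoreanTriple.classification.mpr
    ⟨17*n^2+40*m*n+16*m^2, 2*(13*n^2+24*m*n+16*m^2), 7*n^2-8*m*n-16*m^2,
      Or.inr ⟨by rw [hx]; ring, by rw [hc1]; ring⟩, Or.inl (by rw [hd1]; ring)⟩
  simpa only [sq] using h.eq
end

section
/- For all integers m and n, with x = 4(7n^2-12mn-18m^2)(17n^2+30mn+18m^2)(23n^2+48mn+18m^2), c2 = 3(7n^2-12mn-18m^2)(11n^2+12mn+18m^2)(19n^2+36mn+18m^2), and d2 = (7n^2-12mn-18m^2)(1685n^4+6288mn^3+9180m^2n^2+6048m^3n+1620m^4), the identity x^2 + c2^2 = d2^2 holds. -/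
theorem stmt_14 (m n x c2 d2 : ℤ)
    (hx : x = 4*(7*n^2-12*m*n-18*m^2)*(17*n^2+30*m*n+18*m^2)*(23*n^2+48*m*n+18*m^2))
    (hc2 : c2 = 3*(7*n^2-12*m*n-18*m^2)*(11*n^2+12*m*n+18*m^2)*(19*n^2+36*m*n+18*m^2))
    (hd2 : d2 = (7*n^2-12*m*n-18*m^2)*(1685*n^4+6288*m*n^3+9180*m^2*n^2+6048*m^3*n+1620*m^4)) :
    x^2 + c2^2 = d2^2 := by
  subst hx hc2 hd2
  ring
end

section
/- For all integers m and n, with y = 3(7n^2-12mn-18m^2)(17n^2+30mn+18m^2)(23n^2+48mn+18m^2), z = 48n(n+3m)(4n+3m)(5n+6m)(17n^2+30mn+18m^2), c1 = 9(3n^2+8mn+6m^2)(23n^2+48mn+18m^2)(41n^2+48mn+18m^2), and c2 = 3(7n^2-12mn-18m^2)(11n^2+12mn+18m^2)(19n^2+36mn+18m^2), the identity 2y^2 + 2z^2 = c1^2 + c2^2 holds. -/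
theorem stmt_15 (m n y z c1 c2 : ℤ)
    (hy : y = 3*(7*n^2-12*m*n-18*m^2)*(17*n^2+30*m*n+18*m^2)*(23*n^2+48*m*n+18*m^2))
    (hz : z = 48*n*(n+3*m)*(4*n+3*m)*(5*n+6*m)*(17*n^2+30*m*n+18*m^2))
    (hc1 : c1 = 9*(3*n^2+8*m*n+6*m^2)*(23*n^2+48*m*n+18*m^2)*(41*n^2+48*m*n+18*m^2))
    (hc2 : c2 = 3*(7*n^2-12*m*n-18*m^2)*(11*n^2+12*m*n+18*m^2)*(19*n^2+36*m*n+18*m^2)) :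
    2*y^2 + 2*z^2 = c1^2 + c2^2 := by
  subst hy hz hc1 hc2
  ring
end

section
/- For all integers m and n, with d1 = (n^2+4mn+2m^2)(5n^4+16mn^3+28m^2n^2+32m^3n+20m^4) and d2 = (n^2-2m^2)(5n^4+24mn^3+52m^2n^2+48m^3n+20m^4) as in Parametrization 1, the quantity d1^2 + d2^2 is twice a sum of two squares; specifically d1^2 + d2^2 = 2(y^2 + b^2) where y = 3(n^2-2m^2)(n^2+2mn+2m^2)(n^2+4mn+2m^2) and b = 4(n^2+2mn+2m^2)^3. -/
theorem stmt_18 (m n d1 d2 y b : ℤ)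
    (hd1 : d1 = (n^2+4*m*n+2*m^2)*(5*n^4+16*m*n^3+28*m^2*n^2+32*m^3*n+20*m^4))
    (hd2 : d2 = (n^2-2*m^2)*(5*n^4+24*m*n^3+52*m^2*n^2+48*m^3*n+20*m^4))
    (hy : y = 3*(n^2-2*m^2)*(n^2+2*m*n+2*m^2)*(n^2+4*m*n+2*m^2))
    (hb : b = 4*(n^2+2*m*n+2*m^2)^3) :
    d1^2 + d2^2 = 2*(y^2 + b^2) := by
  subst hd1 hd2 hy hb
  ring
end
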